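/- arXiv:1608.01714 — 5 statements merged into one kernel-verified Lean document; each statement's English description precedes it below -/
import Mathlib

section
/- Let p be a prime, n ≥ 1, and let f be a nonzero polynomial in n variables with coefficients in ℤ_p. Then the zero set {(a_1, …, a_n) ∈ ℤ_p^n : f(a_1, …, a_n) = 0} has measure zero with respect to the Haar probability measure on ℤ_p^n. -/
open MeasureTheory

noncomputable instance (p : ℕ) [Fact p.Prime] : MeasurableSpace ℤ_[p] := borel _
instance (p : ℕ) [Fact p.Prime] : BorelSpace ℤ_[p] := ⟨rfl⟩

noncomputable def padicHaar (p : ℕ) [Fact p.Prime] : Measure ℤ_[p] :=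
  Measure.addHaarMeasure ⟨⟨Set.univ, isCompact_univ⟩, by
    rw [interior_univ]; exact Set.univ_nonempty⟩

section Helpers

variable (p : ℕ) [Fact p.Prime]

instance : (padicHaar p).IsAddHaarMeasure :=
  Measure.isAddHaarMeasure_addHaarMeasure _

instance : (nhdsWithin (0 : ℤ_[p]) {0}ᶜ).NeBot := by
  rw [← mem_closure_iff_nhdsWithin_neBot]
  have hp : ‖(p : ℤ_[p])‖ < 1 := by
    rw [PadicInt.norm_p]
    have : (1:ℝ) < (p:ℝ) := by exact_mod_cast (Fact.out : p.Prime).one_lt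
    rw [inv_lt_one_iff₀]; right; exact this
  have h : Filter.Tendsto (fun k : ℕ => (p : ℤ_[p]) ^ k) Filter.atTop (nhds 0) :=
    tendsto_pow_atTop_nhds_zero_of_norm_lt_one hp
  refine mem_closure_of_tendsto h (Filter.Eventually.of_forall fun k => ?_)
  simp only [Set.mem_compl_iff, Set.mem_singleton_iff]
  exact pow_ne_zero _ (Nat.cast_ne_zero.mpr (Fact.out : p.Prime).ne_zero)

instance : IsProbabilityMeasure (padicHaar p) := by
  constructor
  exact Measure.addHaarMeasure_self (K₀ := ⟨⟨Set.univ, isCompact_univ⟩, by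
    rw [interior_univ]; exact Set.univ_nonempty⟩)

lemma padic_aux : ∀ (n : ℕ) (f : MvPolynomial (Fin n) ℤ_[p]), f ≠ 0 →
    Measure.pi (fun _ : Fin n => padicHaar p)
      {a | MvPolynomial.eval a f = 0} = 0 := by
  intro n
  induction n with
  | zero =>
    intro f hf
    convert measure_empty (μ := Measure.pi (fun _ : Fin 0 => padicHaar p))
    rw [Set.eq_empty_iff_forall_notMem]
    intro a ha
    obtain ⟨c, rfl⟩ := MvPolynomial.C_surjective (Fin 0) f
    simp only [Set.mem_setOf_eq, MvPolynomial.eval_C] at ha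
    exact hf (by rw [ha, map_zero])
  | succ n IH =>
    intro f hf
    have MP := measurePreserving_piFinSuccAbove (fun _ : Fin (n+1) => padicHaar p) 0
    set g := MvPolynomial.finSuccEquiv ℤ_[p] n f with hg
    have hg0 : g ≠ 0 := by
      simp only [hg, Ne, EmbeddingLike.map_eq_zero_iff]; exact hf
    set T : Set (ℤ_[p] × (Fin n → ℤ_[p])) :=
      {q | Polynomial.eval q.1 (Polynomial.map (MvPolynomial.eval q.2) g) = 0} with hT
    have hTeq : T = {q : ℤ_[p] × (Fin n → ℤ_[p]) |
        MvPolynomial.eval (Fin.cons q.1 q.2 : Fin (n+1) → ℤ_[p]) f = 0} := by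
      ext q
      simp only [hT, Set.mem_setOf_eq, MvPolynomial.eval_eq_eval_mv_eval', hg]
    have hTmeas : MeasurableSet T := by
      have hc : Continuous fun q : ℤ_[p] × (Fin n → ℤ_[p]) =>
          MvPolynomial.eval (Fin.cons q.1 q.2 : Fin (n+1) → ℤ_[p]) f := by
        refine (MvPolynomial.continuous_eval f).comp (continuous_pi fun i => ?_)
        refine Fin.cases ?_ ?_ i
        · exact continuous_fst
        · intro j; exact (continuous_apply j).comp continuous_snd
      rw [hTeq]
      exact (isClosed_eq hc continuous_const).measurableSet
    have key : Measure.pi (fun _ : Fin (n+1) => padicHaar p)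
        {a | MvPolynomial.eval a f = 0} = ((padicHaar p).prod
          (Measure.pi (fun _ : Fin n => padicHaar p))) T := by
      rw [← MP.measure_preimage hTmeas.nullMeasurableSet]
      congr 1
      ext a
      simp only [Set.mem_preimage, hTeq, Set.mem_setOf_eq,
        MeasurableEquiv.piFinSuccAbove, MeasurableEquiv.coe_mk,
        Fin.insertNthEquiv_zero, Fin.consEquiv_symm_apply, Fin.cons_self_tail]
    rw [key, Measure.prod_apply_symm hTmeas]
    obtain ⟨k, hk⟩ : ∃ k, g.coeff k ≠ 0 := by
      by_contra h
      push_neg at h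
      exact hg0 (Polynomial.ext fun k => by simpa using h k)
    have hB : (Measure.pi (fun _ : Fin n => padicHaar p))
        {s | Polynomial.map (MvPolynomial.eval s) g = 0} = 0 := by
      refine measure_mono_null (fun s hs => ?_) (IH (g.coeff k) hk)
      simp only [Set.mem_setOf_eq] at hs ⊢
      have := congrArg (fun q => Polynomial.coeff q k) hs
      simpa [Polynomial.coeff_map] using this
    have hae : ∀ᵐ s ∂(Measure.pi fun _ : Fin n => padicHaar p),
        (padicHaar p) ((fun y => (y, s)) ⁻¹' T) = 0 := by
      rw [ae_iff]
      refine measure_mono_null (fun s hs => ?_) hB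
      simp only [Set.mem_setOf_eq] at hs ⊢
      by_contra hmap
      apply hs
      have hfin : {y : ℤ_[p] |
          Polynomial.IsRoot (Polynomial.map (MvPolynomial.eval s) g) y}.Finite :=
        Polynomial.finite_setOf_isRoot hmap
      have heq : (fun y : ℤ_[p] => (y, s)) ⁻¹' T
          = {y : ℤ_[p] | Polynomial.IsRoot (Polynomial.map (MvPolynomial.eval s) g) y} := rfl
      rw [heq]
      exact hfin.measure_zero _
    calc ∫⁻ s, (padicHaar p) ((fun y => (y, s)) ⁻¹' T)
          ∂(Measure.pi fun _ : Fin n => padicHaar p)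
        = ∫⁻ _, 0 ∂(Measure.pi fun _ : Fin n => padicHaar p) :=
          lintegral_congr_ae hae
      _ = 0 := lintegral_zero

end Helpers

/-- The Haar probability measure on `ℤ_p^n`, normalized so that the total space
has measure `1`. -/
noncomputable def padicVectorHaar (p : ℕ) [Fact p.Prime] (n : ℕ) :
    Measure (Fin n → ℤ_[p]) :=
  Measure.addHaarMeasure ⟨⟨Set.univ, isCompact_univ⟩, by
    rw [interior_univ]; exact Set.univ_nonempty⟩

lemma padicVectorHaar_eq (p : ℕ) [Fact p.Prime] (n : ℕ) :
    padicVectorHaar p n = Measure.pi (fun _ : Fin n => padicHaar p) := by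
  have h := Measure.addHaarMeasure_unique
    (Measure.pi (fun _ : Fin n => padicHaar p))
    ⟨⟨Set.univ, isCompact_univ⟩, by rw [interior_univ]; exact Set.univ_nonempty⟩
  rw [h]
  have : (Measure.pi (fun _ : Fin n => padicHaar p))
      (⟨⟨Set.univ, isCompact_univ⟩, by rw [interior_univ]; exact Set.univ_nonempty⟩ :
        TopologicalSpace.PositiveCompacts (Fin n → ℤ_[p])) = 1 := measure_univ
  rw [this, one_smul]
  rfl

theorem zero_set_of_polynomial_measure_zero (p : ℕ) [Fact p.Prime] (n : ℕ) (hn : 1 ≤ n)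
    (f : MvPolynomial (Fin n) ℤ_[p]) (hf : f ≠ 0) :
    padicVectorHaar p n {a : Fin n → ℤ_[p] | MvPolynomial.eval a f = 0} = 0 := by
  rw [padicVectorHaar_eq]
  exact padic_aux p n f hf
end

section
/- Let p be a prime, n, u ≥ 0 integers, and G a finite abelian p-group. Let μ be the Haar probability measure on (n+u) × n matrices over ℤ_p. Then the expected number of surjective ℤ_p-module homomorphisms from the cokernel of M onto G satisfies E_μ[#Sur(coker M, G)] = #Sur(ℤ_p^{n+u}, G) · |G|^{−n}, where #Sur(ℤ_p^{n+u}, G) denotes the number of surjective ℤ_p-module homomorphisms ℤ_p^{n+u} → G. -/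
open MeasureTheory Filter
open scoped ENNReal

instance (p : ℕ) [Fact p.Prime] (m n : ℕ) :
    CompactSpace (Matrix (Fin m) (Fin n) ℤ_[p]) :=
  (inferInstance : CompactSpace (Fin m → Fin n → ℤ_[p]))

noncomputable instance (p : ℕ) [Fact p.Prime] (m n : ℕ) :
    MeasurableSpace (Matrix (Fin m) (Fin n) ℤ_[p]) :=
  (inferInstance : MeasurableSpace (Fin m → Fin n → ℤ_[p]))

instance (p : ℕ) [Fact p.Prime] (m n : ℕ) :
    BorelSpace (Matrix (Fin m) (Fin n) ℤ_[p]) :=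
  (inferInstance : BorelSpace (Fin m → Fin n → ℤ_[p]))

/-- The Haar probability measure on the compact additive group of `m × n` matrices
over the `p`-adic integers, normalized so that the total space has measure `1`. -/
noncomputable def padicMatrixHaar (p : ℕ) [Fact p.Prime] (m n : ℕ) :
    Measure (Matrix (Fin m) (Fin n) ℤ_[p]) :=
  Measure.addHaarMeasure ⟨⟨Set.univ, isCompact_univ⟩, by
    rw [interior_univ]; exact Set.univ_nonempty⟩

section Aux

variable {p : ℕ} [Fact p.Prime] {m : ℕ} {G : Type} [AddCommGroup G] [Module ℤ_[p] G] [Finite G]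

/-- Level sets of a linear map to a finite `p`-group are open. -/
lemma aux_isOpen (hG : ∃ k : ℕ, Nat.card G = p ^ k)
    (F : (Fin m → ℤ_[p]) →ₗ[ℤ_[p]] G) (g : G) : IsOpen {v : Fin m → ℤ_[p] | F v = g} := by
  obtain ⟨k, hk⟩ := hG
  have hp : (0:ℝ) < (p:ℝ) ^ (-(k:ℤ)) := by
    have : (0:ℝ) < (p:ℝ) := by exact_mod_cast (Fact.out : p.Prime).pos
    positivity
  rw [Metric.isOpen_iff]
  intro v hv
  refine ⟨(p : ℝ) ^ (-(k:ℤ)), hp, ?_⟩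
  intro w hw
  have hdvd : ∀ i, ((p : ℤ_[p]) ^ k) ∣ (w - v) i := by
    intro i
    have h1 : ‖(w - v) i‖ ≤ dist w v := by
      rw [dist_eq_norm]; exact norm_le_pi_norm (w - v) i
    have h2 : ‖(w - v) i‖ ≤ (p : ℝ) ^ (-(k:ℤ)) :=
      le_of_lt (lt_of_le_of_lt h1 (by rwa [Metric.mem_ball] at hw))
    exact Ideal.mem_span_singleton.mp
      ((PadicInt.norm_le_pow_iff_mem_span_pow _ k).mp h2)
  choose c hc using hdvd
  have hwv : w = v + ((p : ℤ_[p]) ^ k) • c := by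
    funext i
    have := hc i
    simp only [Pi.sub_apply] at this
    simp only [Pi.add_apply, Pi.smul_apply, smul_eq_mul]
    rw [← this]; ring
  have h0 : ((p : ℤ_[p]) ^ k) • F c = 0 := by
    have hcast : ((p : ℤ_[p]) ^ k) = ((p ^ k : ℕ) : ℤ_[p]) := by push_cast; ring
    rw [hcast, Nat.cast_smul_eq_nsmul, ← hk, card_nsmul_eq_zero']
  show F w = g
  rw [hwv, map_add, LinearMap.map_smul, h0, add_zero, hv]


set_option maxHeartbeats 800000 in
/-- For a surjective linear map `F` onto a finite `p`-group, the measure of matrices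
all of whose columns lie in the kernel of `F` is `|G|^{-n}`. -/
lemma aux_measure (hG : ∃ k : ℕ, Nat.card G = p ^ k) (n : ℕ)
    (F : (Fin m → ℤ_[p]) →ₗ[ℤ_[p]] G) (hF : Function.Surjective F) :
    padicMatrixHaar p m n {M : Matrix (Fin m) (Fin n) ℤ_[p] | ∀ j, F (fun i => M i j) = 0} =
      ((Nat.card G : ℝ≥0∞) ^ n)⁻¹ := by
  classical
  haveI : Fintype G := Fintype.ofFinite G
  set μ := padicMatrixHaar p m n with hμ
  haveI hHaar : μ.IsAddHaarMeasure := Measure.isAddHaarMeasure_addHaarMeasure _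
  have huniv : μ Set.univ = 1 := Measure.addHaarMeasure_self
  set A : (Fin n → G) → Set (Matrix (Fin m) (Fin n) ℤ_[p]) :=
    fun s => {M | ∀ j, F (fun i => M i j) = s j} with hA
  have hopen : ∀ s, IsOpen (A s) := by
    intro s
    have : A s = ⋂ j, (fun (M : Matrix (Fin m) (Fin n) ℤ_[p]) => fun i => M i j) ⁻¹'
        {v | F v = s j} := by
      ext M; simp [hA, Set.mem_iInter]
    rw [this]
    exact isOpen_iInter_of_finite fun j =>
      (aux_isOpen hG F (s j)).preimage
        (continuous_pi fun i => (continuous_apply j).comp (continuous_apply i))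
  have hmeas : ∀ s, MeasurableSet (A s) := fun s => (hopen s).measurableSet
  have hdisj : Pairwise (Function.onFun Disjoint A) := by
    intro s t hst
    rw [Function.onFun, Set.disjoint_left]
    intro M hMs hMt
    exact hst (funext fun j => (hMs j).symm.trans (hMt j))
  have hcover : (⋃ s, A s) = Set.univ := by
    ext M
    simp only [Set.mem_iUnion, Set.mem_univ, iff_true]
    exact ⟨fun j => F (fun i => M i j), fun j => rfl⟩
  have htrans : ∀ s, μ (A s) = μ (A 0) := by
    intro s
    choose v hv using fun j => hF (s j)
    set Ms : Matrix (Fin m) (Fin n) ℤ_[p] := fun i j => v j i with hMs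
    have key : (fun M => M + Ms) ⁻¹' (A s) = A 0 := by
      ext M
      simp only [Set.mem_preimage, hA, Set.mem_setOf_eq, Pi.zero_apply]
      constructor
      · intro h j
        have h1 : (fun i => (M + Ms) i j) = (fun i => M i j) + v j := by
          funext i; rfl
        have := h j
        rw [h1, map_add, hv j] at this
        exact add_right_cancel (this.trans (zero_add (s j)).symm)
      · intro h j
        have h1 : (fun i => (M + Ms) i j) = (fun i => M i j) + v j := by
          funext i; rfl
        rw [h1, map_add, h j, hv j, zero_add]
    calc μ (A s) = μ ((fun M => M + Ms) ⁻¹' (A s)) :=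
          (measure_preimage_add_right μ Ms (A s)).symm
      _ = μ (A 0) := by rw [key]
  have hsum : (Fintype.card G : ℝ≥0∞) ^ n * μ (A 0) = 1 := by
    have h1 : μ (⋃ s, A s) = ∑' s, μ (A s) := measure_iUnion hdisj hmeas
    rw [hcover, huniv, tsum_fintype] at h1
    have h2 : ∑ s : Fin n → G, μ (A s) = (Fintype.card (Fin n → G)) • μ (A 0) :=
      calc ∑ s : Fin n → G, μ (A s) = ∑ _s : Fin n → G, μ (A 0) :=
            Finset.sum_congr rfl fun s _ => htrans s
        _ = Fintype.card (Fin n → G) • μ (A 0) := by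
            rw [Finset.sum_const, Finset.card_univ]
    rw [h2, Fintype.card_fun, Fintype.card_fin, nsmul_eq_mul] at h1
    rw [Nat.cast_pow] at h1
    exact h1.symm
  have hcard : (Nat.card G : ℝ≥0∞) = (Fintype.card G : ℝ≥0∞) := by
    rw [Nat.card_eq_fintype_card]
  rw [hcard]
  have hne0 : ((Fintype.card G : ℝ≥0∞)) ^ n ≠ 0 := by
    apply pow_ne_zero
    simp [Fintype.card_ne_zero]
  have hnetop : ((Fintype.card G : ℝ≥0∞)) ^ n ≠ ⊤ := by
    exact ENNReal.pow_ne_top (ENNReal.natCast_ne_top _)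
  have h0mem : {M : Matrix (Fin m) (Fin n) ℤ_[p] | ∀ j, F (fun i => M i j) = 0} = A 0 := by
    simp [hA]
  rw [h0mem]
  have hfin : μ (A 0) = ((Fintype.card G : ℝ≥0∞) ^ n)⁻¹ *
      ((Fintype.card G : ℝ≥0∞) ^ n * μ (A 0)) := by
    rw [← mul_assoc, ENNReal.inv_mul_cancel hne0 hnetop, one_mul]
  rw [hfin, hsum, mul_one]


/-- Surjections from a quotient correspond to surjections killing the submodule. -/
lemma aux_card (R : Submodule ℤ_[p] (Fin m → ℤ_[p])) :
    Nat.card {f : ((Fin m → ℤ_[p]) ⧸ R) →ₗ[ℤ_[p]] G // Function.Surjective f} =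
      Nat.card {F : (Fin m → ℤ_[p]) →ₗ[ℤ_[p]] G //
        Function.Surjective F ∧ R ≤ LinearMap.ker F} := by
  apply Nat.card_congr
  refine
    { toFun := fun f => ⟨f.1 ∘ₗ R.mkQ, f.2.comp (R.mkQ_surjective), fun x hx => ?_⟩
      invFun := fun F => ⟨R.liftQ F.1 F.2.2, fun g => ?_⟩
      left_inv := fun f => Subtype.ext (by
        apply Submodule.linearMap_qext
        exact R.liftQ_mkQ (f.1 ∘ₗ R.mkQ) _)
      right_inv := fun F => Subtype.ext (R.liftQ_mkQ F.1 F.2.2) }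
  · simp only [LinearMap.mem_ker, LinearMap.comp_apply, Submodule.mkQ_apply]
    rw [(Submodule.Quotient.mk_eq_zero R).mpr hx, map_zero]
  · obtain ⟨x, hx⟩ := F.2.1 g
    exact ⟨R.mkQ x, by rw [Submodule.mkQ_apply, Submodule.liftQ_apply]; exact hx⟩

end Aux

theorem expected_surjections_coker (p : ℕ) [Fact p.Prime] (n u : ℕ)
    (G : Type) [AddCommGroup G] [Module ℤ_[p] G] [Finite G]
    (hG : ∃ k : ℕ, Nat.card G = p ^ k) :
    ∫ M : Matrix (Fin (n + u)) (Fin n) ℤ_[p],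
        (Nat.card {f : ((Fin (n + u) → ℤ_[p]) ⧸ LinearMap.range M.mulVecLin) →ₗ[ℤ_[p]] G //
          Function.Surjective f} : ℝ) ∂(padicMatrixHaar p (n + u) n) =
      (Nat.card {f : (Fin (n + u) → ℤ_[p]) →ₗ[ℤ_[p]] G // Function.Surjective f} : ℝ) *
        ((Nat.card G : ℝ))⁻¹ ^ n := by
  classical
  obtain ⟨k, hk⟩ := id hG
  haveI : Fintype G := Fintype.ofFinite G
  haveI : Fintype ((Fin (n + u) → ℤ_[p]) →ₗ[ℤ_[p]] G) := by
    have hfin : Finite ((Fin (n + u) → ℤ_[p]) →ₗ[ℤ_[p]] G) := by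
      apply Finite.of_injective (fun F => fun i => F (Pi.single i 1))
      intro F₁ F₂ h
      apply Module.Basis.ext (Pi.basisFun ℤ_[p] (Fin (n + u)))
      intro i
      rw [Pi.basisFun_apply]
      exact congrFun h i
    exact Fintype.ofFinite _
  set μ := padicMatrixHaar p (n + u) n with hμ
  haveI : μ.IsAddHaarMeasure := Measure.isAddHaarMeasure_addHaarMeasure _
  haveI : IsProbabilityMeasure μ := ⟨Measure.addHaarMeasure_self⟩
  set S : Finset ((Fin (n + u) → ℤ_[p]) →ₗ[ℤ_[p]] G) :=
    Finset.univ.filter fun F => Function.Surjective F with hS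
  set A : ((Fin (n + u) → ℤ_[p]) →ₗ[ℤ_[p]] G) → Set (Matrix (Fin (n + u)) (Fin n) ℤ_[p]) :=
    fun F => {M | ∀ j, F (fun i => M i j) = 0} with hA
  have hmeasA : ∀ F : (Fin (n + u) → ℤ_[p]) →ₗ[ℤ_[p]] G, MeasurableSet (A F) := by
    intro F
    have : A F = ⋂ j, (fun (M : Matrix (Fin (n + u)) (Fin n) ℤ_[p]) => fun i => M i j) ⁻¹'
        {v | F v = 0} := by
      ext M; simp [hA, Set.mem_iInter]
    rw [this]
    exact (isOpen_iInter_of_finite fun j => (aux_isOpen hG F 0).preimage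
      (continuous_pi fun i => (continuous_apply j).comp (continuous_apply i))).measurableSet
  have hcond : ∀ (M : Matrix (Fin (n + u)) (Fin n) ℤ_[p])
      (F : (Fin (n + u) → ℤ_[p]) →ₗ[ℤ_[p]] G),
      (LinearMap.range M.mulVecLin ≤ LinearMap.ker F) ↔ M ∈ A F := by
    intro M F
    rw [LinearMap.range_le_ker_iff]
    constructor
    · intro h j
      have h1 := LinearMap.ext_iff.mp h (Pi.single j 1)
      simp only [LinearMap.comp_apply, Matrix.mulVecLin_apply, LinearMap.zero_apply,
        Matrix.mulVec_single_one] at h1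
      exact h1
    · intro h
      apply Module.Basis.ext (Pi.basisFun ℤ_[p] (Fin n))
      intro j
      rw [Pi.basisFun_apply]
      simp only [LinearMap.comp_apply, Matrix.mulVecLin_apply, LinearMap.zero_apply,
        Matrix.mulVec_single_one]
      have := h j
      exact this
  have hpoint : ∀ M : Matrix (Fin (n + u)) (Fin n) ℤ_[p],
      (Nat.card {f : ((Fin (n + u) → ℤ_[p]) ⧸ LinearMap.range M.mulVecLin) →ₗ[ℤ_[p]] G //
        Function.Surjective f} : ℝ) =
      ∑ F ∈ S, Set.indicator (A F) (fun _ => (1 : ℝ)) M := by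
    intro M
    rw [aux_card (LinearMap.range M.mulVecLin), Nat.card_eq_fintype_card, Fintype.card_subtype]
    have hfilt : (Finset.univ.filter fun F : (Fin (n + u) → ℤ_[p]) →ₗ[ℤ_[p]] G =>
        Function.Surjective F ∧ LinearMap.range M.mulVecLin ≤ LinearMap.ker F) =
        S.filter (fun F => M ∈ A F) := by
      rw [hS, Finset.filter_filter]
      apply Finset.filter_congr
      intro F _
      rw [hcond M F]
    rw [hfilt, ← Finset.sum_boole]
    exact Finset.sum_congr rfl fun F _ => by rw [Set.indicator_apply]
  calc ∫ M, (Nat.card {f : ((Fin (n + u) → ℤ_[p]) ⧸ LinearMap.range M.mulVecLin) →ₗ[ℤ_[p]] G //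
          Function.Surjective f} : ℝ) ∂μ
      = ∫ M, (∑ F ∈ S, Set.indicator (A F) (fun _ => (1 : ℝ)) M) ∂μ := by
        exact integral_congr_ae (Filter.Eventually.of_forall hpoint)
    _ = ∑ F ∈ S, ∫ M, Set.indicator (A F) (fun _ => (1 : ℝ)) M ∂μ :=
        integral_finset_sum S (fun F _ => (integrable_const (1 : ℝ)).indicator (hmeasA F))
    _ = ∑ _F ∈ S, ((Nat.card G : ℝ))⁻¹ ^ n := by
        apply Finset.sum_congr rfl
        intro F hF
        have hFs : Function.Surjective F := by
          simpa [hS, Finset.mem_filter] using hF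
        rw [integral_indicator_const _ (hmeasA F), smul_eq_mul, mul_one]
        have h2 : μ (A F) = ((Nat.card G : ℝ≥0∞) ^ n)⁻¹ := aux_measure hG n F hFs
        rw [measureReal_def, h2]
        rw [ENNReal.toReal_inv]
        simp [inv_pow]
    _ = (Nat.card {f : (Fin (n + u) → ℤ_[p]) →ₗ[ℤ_[p]] G // Function.Surjective f} : ℝ) *
        ((Nat.card G : ℝ))⁻¹ ^ n := by
        rw [Finset.sum_const, nsmul_eq_mul]
        congr 1
        rw [hS, Nat.card_eq_fintype_card, Fintype.card_subtype]
end

section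
/- Let p be a prime, u ≥ 0 an integer, and G a finite abelian p-group. For each n, let μ_n be the Haar probability measure on (n+u) × n matrices over ℤ_p. Then lim_{n→∞} E_{μ_n}[#Sur(coker M, G)] = |G|^u, where the expectation is of the number of surjective ℤ_p-module homomorphisms from coker M onto G. -/
open MeasureTheory Filter

open scoped ENNReal
open Function

variable {p : ℕ} [Fact p.Prime] {G : Type} [AddCommGroup G] [Module ℤ_[p] G] [Finite G]

/-- Evaluation equivalence: linear maps from `ℤ_p^m` to `G` are given by the images of basis. -/
noncomputable def evalEquiv (m : ℕ) : ((Fin m → ℤ_[p]) →ₗ[ℤ_[p]] G) ≃ (Fin m → G) where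
  toFun f := fun i => f (Pi.single i 1)
  invFun t := ∑ i, (LinearMap.proj i : (Fin m → ℤ_[p]) →ₗ[ℤ_[p]] ℤ_[p]).smulRight (t i)
  left_inv f := by
    ext v
    simp [LinearMap.smulRight_apply, LinearMap.proj_apply, Pi.single_apply, ite_smul,
      Finset.sum_ite_eq']
  right_inv t := by
    ext i
    simp [Pi.single_apply, Finset.sum_ite_eq']

instance (m : ℕ) : Finite ((Fin m → ℤ_[p]) →ₗ[ℤ_[p]] G) :=
  Finite.of_equiv _ (evalEquiv m).symm

theorem card_linearMap (m : ℕ) :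
    Nat.card ((Fin m → ℤ_[p]) →ₗ[ℤ_[p]] G) = Nat.card G ^ m := by
  rw [Nat.card_congr (evalEquiv m), Nat.card_fun]
  simp

instance : Finite (Submodule ℤ_[p] G) :=
  Finite.of_injective (fun H => (H : Set G)) fun _ _ h => SetLike.coe_injective h

/-- Linear maps with range in a submodule `H` correspond to linear maps into `H`. -/
noncomputable def restrictEquiv (m : ℕ) (H : Submodule ℤ_[p] G) :
    {f : (Fin m → ℤ_[p]) →ₗ[ℤ_[p]] G // LinearMap.range f ≤ H} ≃
      ((Fin m → ℤ_[p]) →ₗ[ℤ_[p]] H) where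
  toFun f := LinearMap.codRestrict H f.1 fun x => f.2 ⟨x, rfl⟩
  invFun g := ⟨H.subtype.comp g, by rintro _ ⟨x, rfl⟩; exact (g x).2⟩
  left_inv f := by ext x; rfl
  right_inv g := by ext x; rfl

theorem card_range_le (m : ℕ) (H : Submodule ℤ_[p] G) :
    Nat.card {f : (Fin m → ℤ_[p]) →ₗ[ℤ_[p]] G // LinearMap.range f ≤ H}
      = Nat.card H ^ m := by
  rw [Nat.card_congr (restrictEquiv m H), card_linearMap]

theorem card_submodule_le (k : ℕ) (hk : Nat.card G = p ^ k) (H : Submodule ℤ_[p] G)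
    (hH : H ≠ ⊤) : Nat.card H ≤ p ^ (k - 1) := by
  have hp := (Fact.out : p.Prime)
  have hdvd : Nat.card H ∣ p ^ k := by
    rw [← hk]
    exact AddSubgroup.card_addSubgroup_dvd_card H.toAddSubgroup
  obtain ⟨j, hj, hcard⟩ := (Nat.dvd_prime_pow hp).mp hdvd
  have hjk : j ≠ k := by
    rintro rfl
    apply hH
    have : H.toAddSubgroup = ⊤ := AddSubgroup.eq_top_of_card_eq _
      (by rw [show Nat.card H.toAddSubgroup = Nat.card H from rfl, hcard, hk])
    ext x
    simpa using SetLike.ext_iff.mp this x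
  rw [hcard]
  exact Nat.pow_le_pow_right hp.one_le (by omega)

theorem card_nonsurj_le (k : ℕ) (hk : Nat.card G = p ^ k) (m : ℕ) :
    Nat.card {f : (Fin m → ℤ_[p]) →ₗ[ℤ_[p]] G // ¬ Surjective f}
      ≤ Nat.card {H : Submodule ℤ_[p] G // H ≠ ⊤} * p ^ ((k - 1) * m) := by
  classical
  have : Fintype ((Fin m → ℤ_[p]) →ₗ[ℤ_[p]] G) := Fintype.ofFinite _
  have : Fintype (Submodule ℤ_[p] G) := Fintype.ofFinite _
  rw [Nat.card_eq_fintype_card, Fintype.card_subtype]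
  calc (Finset.univ.filter fun f : (Fin m → ℤ_[p]) →ₗ[ℤ_[p]] G => ¬ Surjective f).card
      ≤ ((Finset.univ.filter fun H : Submodule ℤ_[p] G => H ≠ ⊤).biUnion
          fun H => Finset.univ.filter fun f : (Fin m → ℤ_[p]) →ₗ[ℤ_[p]] G =>
            LinearMap.range f ≤ H).card := by
        apply Finset.card_le_card
        intro f hf
        simp only [Finset.mem_filter, Finset.mem_univ, true_and] at hf
        simp only [Finset.mem_biUnion, Finset.mem_filter, Finset.mem_univ, true_and]
        exact ⟨LinearMap.range f, by rwa [ne_eq, LinearMap.range_eq_top], le_refl _⟩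
    _ ≤ ∑ H ∈ Finset.univ.filter fun H : Submodule ℤ_[p] G => H ≠ ⊤,
          (Finset.univ.filter fun f : (Fin m → ℤ_[p]) →ₗ[ℤ_[p]] G =>
            LinearMap.range f ≤ H).card := Finset.card_biUnion_le
    _ ≤ ∑ _H ∈ Finset.univ.filter fun H : Submodule ℤ_[p] G => H ≠ ⊤,
          p ^ ((k - 1) * m) := by
        apply Finset.sum_le_sum
        intro H hH
        simp only [Finset.mem_filter, Finset.mem_univ, true_and] at hH
        have h1 : (Finset.univ.filter fun f : (Fin m → ℤ_[p]) →ₗ[ℤ_[p]] G =>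
            LinearMap.range f ≤ H).card
            = Nat.card {f : (Fin m → ℤ_[p]) →ₗ[ℤ_[p]] G // LinearMap.range f ≤ H} := by
          rw [Nat.card_eq_fintype_card, Fintype.card_subtype]
        rw [h1, card_range_le, pow_mul]
        exact Nat.pow_le_pow_left (card_submodule_le k hk H hH) m
    _ = Nat.card {H : Submodule ℤ_[p] G // H ≠ ⊤} * p ^ ((k - 1) * m) := by
        rw [Finset.sum_const, smul_eq_mul, Nat.card_eq_fintype_card, Fintype.card_subtype]

theorem card_surj_le (m : ℕ) :
    Nat.card {f : (Fin m → ℤ_[p]) →ₗ[ℤ_[p]] G // Surjective f} ≤ Nat.card G ^ m := by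
  rw [← card_linearMap (p := p) (G := G) m]
  exact Nat.card_le_card_of_injective _ Subtype.val_injective

theorem card_surj_lower (k : ℕ) (hk : Nat.card G = p ^ k) (m : ℕ) :
    Nat.card G ^ m ≤ Nat.card {f : (Fin m → ℤ_[p]) →ₗ[ℤ_[p]] G // Surjective f}
      + Nat.card {H : Submodule ℤ_[p] G // H ≠ ⊤} * p ^ ((k - 1) * m) := by
  classical
  have : Fintype ((Fin m → ℤ_[p]) →ₗ[ℤ_[p]] G) := Fintype.ofFinite _
  have htot : Nat.card ((Fin m → ℤ_[p]) →ₗ[ℤ_[p]] G)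
      = Nat.card {f : (Fin m → ℤ_[p]) →ₗ[ℤ_[p]] G // Surjective f}
        + Nat.card {f : (Fin m → ℤ_[p]) →ₗ[ℤ_[p]] G // ¬ Surjective f} := by
    simp only [Nat.card_eq_fintype_card]
    rw [Fintype.card_subtype_compl]
    have := Fintype.card_subtype_le (fun f : (Fin m → ℤ_[p]) →ₗ[ℤ_[p]] G => Surjective f)
    omega
  calc Nat.card G ^ m = Nat.card ((Fin m → ℤ_[p]) →ₗ[ℤ_[p]] G) := (card_linearMap m).symm
    _ ≤ _ := by rw [htot]; exact Nat.add_le_add_left (card_nonsurj_le k hk m) _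

theorem pk_smul_eq_zero (k : ℕ) (hk : Nat.card G = p ^ k) (g : G) :
    ((p : ℤ_[p]) ^ k) • g = 0 := by
  have h1 : ((p : ℤ_[p]) ^ k) = ((p ^ k : ℕ) : ℤ_[p]) := by push_cast; ring
  rw [h1, Nat.cast_smul_eq_nsmul, ← hk, card_nsmul_eq_zero']

/-- Apply a linear map to all columns of a matrix. -/
noncomputable def colApply {m n : ℕ} (f : (Fin m → ℤ_[p]) →ₗ[ℤ_[p]] G)
    (M : Matrix (Fin m) (Fin n) ℤ_[p]) : Fin n → G :=
  fun j => f (fun i => M i j)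

theorem colApply_add {m n : ℕ} (f : (Fin m → ℤ_[p]) →ₗ[ℤ_[p]] G)
    (M N : Matrix (Fin m) (Fin n) ℤ_[p]) :
    colApply f (M + N) = colApply f M + colApply f N := by
  ext j
  show f (fun i => (M + N) i j) = _
  rw [show (fun i => (M + N) i j) = (fun i => M i j) + fun i => N i j from rfl, map_add]
  rfl

theorem colApply_surjective {m n : ℕ} (f : (Fin m → ℤ_[p]) →ₗ[ℤ_[p]] G)
    (hf : Surjective f) : Surjective (colApply (n := n) f) := by
  intro x
  choose v hv using fun j => hf (x j)
  exact ⟨Matrix.of fun i j => v j i, funext fun j => hv j⟩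

theorem colApply_eq_zero_iff {m n : ℕ} (f : (Fin m → ℤ_[p]) →ₗ[ℤ_[p]] G)
    (M : Matrix (Fin m) (Fin n) ℤ_[p]) :
    colApply f M = 0 ↔ LinearMap.range M.mulVecLin ≤ LinearMap.ker f := by
  constructor
  · intro h
    rintro _ ⟨v, rfl⟩
    have hm : M.mulVecLin v = ∑ j, v j • fun i => M i j := by
      ext i
      simp [Matrix.mulVecLin_apply, Matrix.mulVec, dotProduct, mul_comm]
    rw [LinearMap.mem_ker, hm, map_sum]
    refine Finset.sum_eq_zero fun j _ => ?_
    rw [LinearMap.map_smul, show f (fun i => M i j) = colApply f M j from rfl, h]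
    simp
  · intro h
    ext j
    have : M.mulVecLin (Pi.single j 1) = fun i => M i j := by
      simp [Matrix.mulVecLin_apply]; rfl
    have h2 := h (LinearMap.mem_range_self _ (Pi.single j 1))
    rw [LinearMap.mem_ker, this] at h2
    exact h2

section Meas

variable (p) (k m n : ℕ)

theorem toZModPow_eq_iff_dvd (x y : ℤ_[p]) :
    PadicInt.toZModPow k x = PadicInt.toZModPow k y ↔ (p : ℤ_[p]) ^ k ∣ y - x := by
  rw [← sub_eq_zero, ← map_sub, ← RingHom.mem_ker, PadicInt.ker_toZModPow,
    Ideal.mem_span_singleton]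
  exact ⟨fun h => (dvd_sub_comm).mp h, fun h => (dvd_sub_comm).mp h⟩

/-- The set of matrices all of whose entries are divisible by `p ^ k`. -/
def Wset : Set (Matrix (Fin m) (Fin n) ℤ_[p]) :=
  {M | ∀ i j, (p : ℤ_[p]) ^ k ∣ M i j}

theorem measurableSet_Wset : MeasurableSet (Wset p k m n) := by
  have hB : MeasurableSet {c : ℤ_[p] | ‖c‖ ≤ (p : ℝ) ^ (-(k : ℤ))} :=
    (isClosed_le continuous_norm continuous_const).measurableSet
  have h1 : Wset p k m n =
      Set.pi Set.univ fun _ : Fin m => Set.pi Set.univ fun _ : Fin n =>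
        {c : ℤ_[p] | ‖c‖ ≤ (p : ℝ) ^ (-(k : ℤ))} := by
    ext M
    simp only [Wset, Set.mem_setOf_eq, Set.mem_univ_pi]
    refine forall_congr' fun i => ?_
    simp only [Set.mem_univ_pi, Set.mem_setOf_eq, Set.mem_univ, true_implies]
    refine forall_congr' fun j => ?_
    rw [PadicInt.norm_le_pow_iff_mem_span_pow, Ideal.mem_span_singleton]
  rw [h1]
  exact MeasurableSet.univ_pi fun i => MeasurableSet.univ_pi fun j => hB

variable {p k m n}

theorem measurableSet_of_saturated {S : Set (Matrix (Fin m) (Fin n) ℤ_[p])}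
    (hS : ∀ M w, M ∈ S → w ∈ Wset p k m n → M + w ∈ S) : MeasurableSet S := by
  set ρ : Matrix (Fin m) (Fin n) ℤ_[p] → Matrix (Fin m) (Fin n) (ZMod (p ^ k)) :=
    fun M => Matrix.of fun i j => PadicInt.toZModPow k (M i j) with hρ
  have key : ∀ M M' : Matrix (Fin m) (Fin n) ℤ_[p],
      ρ M = ρ M' ↔ M' - M ∈ Wset p k m n := by
    intro M M'
    constructor
    · intro h i j
      have h2 : PadicInt.toZModPow k (M i j) = PadicInt.toZModPow k (M' i j) :=
        congrFun (congrFun h i) j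
      simpa [Matrix.sub_apply] using (toZModPow_eq_iff_dvd p k _ _).mp h2
    · intro h
      ext i j
      exact (toZModPow_eq_iff_dvd p k (M i j) (M' i j)).mpr (by simpa using h i j)
  have hsat : S = ⋃ y ∈ ρ '' S, ρ ⁻¹' {y} := by
    ext M
    simp only [Set.mem_iUnion, Set.mem_preimage, Set.mem_singleton_iff, exists_prop,
      Set.mem_image]
    constructor
    · exact fun h => ⟨ρ M, ⟨M, h, rfl⟩, rfl⟩
    · rintro ⟨y, ⟨M₀, hM₀, hy⟩, hMy⟩
      have hρeq : ρ M₀ = ρ M := by rw [hy, hMy]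
      have := hS M₀ (M - M₀) hM₀ ((key M₀ M).mp hρeq)
      simpa using this
  rw [hsat]
  refine MeasurableSet.biUnion (Set.to_countable _) ?_
  rintro y ⟨M₀, _, rfl⟩
  have h2 : ρ ⁻¹' {ρ M₀} = (fun M => M - M₀) ⁻¹' (Wset p k m n) := by
    ext M
    simp only [Set.mem_preimage, Set.mem_singleton_iff]
    exact ⟨fun h => (key M₀ M).mp h.symm, fun h => ((key M₀ M).mpr h).symm⟩
  rw [h2]
  exact (measurableSet_Wset p k m n).preimage (continuous_id.sub continuous_const).measurable

end Meas

section FiberMeasure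

variable {m n : ℕ}

instance padicMatrixHaar_prob (m n : ℕ) : IsProbabilityMeasure (padicMatrixHaar p m n) :=
  ⟨by
    have := MeasureTheory.Measure.addHaarMeasure_self
      (K₀ := (⟨⟨Set.univ, isCompact_univ⟩, by
        rw [interior_univ]; exact Set.univ_nonempty⟩ :
          TopologicalSpace.PositiveCompacts (Matrix (Fin m) (Fin n) ℤ_[p])))
    simpa [padicMatrixHaar] using this⟩

instance padicMatrixHaar_inv (m n : ℕ) :
    (padicMatrixHaar p m n).IsAddLeftInvariant := by
  unfold padicMatrixHaar
  infer_instance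

theorem colApply_wset_eq_zero {k : ℕ} (hk : Nat.card G = p ^ k)
    (f : (Fin m → ℤ_[p]) →ₗ[ℤ_[p]] G) {w : Matrix (Fin m) (Fin n) ℤ_[p]}
    (hw : w ∈ Wset p k m n) : colApply f w = 0 := by
  ext j
  choose d hd using fun i => hw i j
  have h1 : (fun i => w i j) = ((p : ℤ_[p]) ^ k) • d := by
    funext i
    rw [Pi.smul_apply, smul_eq_mul, ← hd i]
  show f (fun i => w i j) = 0
  rw [h1, LinearMap.map_smul, pk_smul_eq_zero k hk]

theorem measurableSet_colApply_fiber {k : ℕ} (hk : Nat.card G = p ^ k)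
    (f : (Fin m → ℤ_[p]) →ₗ[ℤ_[p]] G) (x : Fin n → G) :
    MeasurableSet (colApply f ⁻¹' {x}) := by
  apply measurableSet_of_saturated (k := k)
  intro M w hM hw
  simp only [Set.mem_preimage, Set.mem_singleton_iff] at hM ⊢
  rw [colApply_add, colApply_wset_eq_zero hk f hw, add_zero, hM]

theorem measure_colApply_fiber_zero {k : ℕ} (hk : Nat.card G = p ^ k)
    (f : (Fin m → ℤ_[p]) →ₗ[ℤ_[p]] G) (hf : Function.Surjective f) :
    padicMatrixHaar p m n (colApply f ⁻¹' {(0 : Fin n → G)})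
      = ((Nat.card G : ℝ≥0∞) ^ n)⁻¹ := by
  classical
  set μ := padicMatrixHaar p m n with hμ
  have heq : ∀ x : Fin n → G, μ (colApply f ⁻¹' {x}) = μ (colApply f ⁻¹' {(0 : Fin n → G)}) := by
    intro x
    obtain ⟨M₀, hM₀⟩ := colApply_surjective f hf x
    have h1 : colApply f ⁻¹' {(0 : Fin n → G)} =
        (fun M => M₀ + M) ⁻¹' (colApply f ⁻¹' {x}) := by
      ext M
      simp only [Set.mem_preimage, Set.mem_singleton_iff, colApply_add, hM₀]
      constructor
      · intro h; rw [h, add_zero]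
      · intro h; exact by rwa [add_eq_left] at h
    rw [h1, measure_preimage_add]
  have hdisj : Pairwise (Function.onFun Disjoint fun x : Fin n → G => colApply f ⁻¹' {x}) := by
    intro x y hxy
    apply Set.disjoint_left.mpr
    intro M hx hy
    simp only [Set.mem_preimage, Set.mem_singleton_iff] at hx hy
    exact hxy (hx ▸ hy ▸ rfl)
  have huniv : Set.univ = ⋃ x : Fin n → G, colApply f ⁻¹' {x} := by
    ext M
    simp only [Set.mem_univ, true_iff, Set.mem_iUnion, Set.mem_preimage, Set.mem_singleton_iff]
    exact ⟨colApply f M, rfl⟩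
  letI : Fintype (Fin n → G) := Fintype.ofFinite _
  have h2 : (1 : ℝ≥0∞) = ∑ x : Fin n → G, μ (colApply f ⁻¹' {x}) := by
    rw [← tsum_fintype (L := SummationFilter.unconditional _), ← measure_iUnion hdisj fun x => measurableSet_colApply_fiber hk f x,
      ← huniv]
    exact (measure_univ).symm
  rw [Finset.sum_congr rfl (fun x _ => heq x), Finset.sum_const, Finset.card_univ] at h2
  have hcard : (Fintype.card (Fin n → G) : ℝ≥0∞) = (Nat.card G : ℝ≥0∞) ^ n := by
    rw [← Nat.card_eq_fintype_card, Nat.card_fun]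
    push_cast
    simp
  have h3 : ((Nat.card G : ℝ≥0∞) ^ n) * μ (colApply f ⁻¹' {(0 : Fin n → G)}) = 1 := by
    rw [h2, nsmul_eq_mul, hcard]
  have h0 : ((Nat.card G : ℝ≥0∞) ^ n) ≠ 0 := by
    simp [Nat.card_pos.ne']
  have htop : ((Nat.card G : ℝ≥0∞) ^ n) ≠ ⊤ := by
    simp [ENNReal.natCast_ne_top]
  calc μ (colApply f ⁻¹' {(0 : Fin n → G)})
      = ((Nat.card G : ℝ≥0∞) ^ n)⁻¹ * (((Nat.card G : ℝ≥0∞) ^ n) *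
        μ (colApply f ⁻¹' {(0 : Fin n → G)})) := by
        rw [← mul_assoc, ENNReal.inv_mul_cancel h0 htop, one_mul]
    _ = ((Nat.card G : ℝ≥0∞) ^ n)⁻¹ := by rw [h3, mul_one]

end FiberMeasure

section Integral

open Function

variable {m n : ℕ}

/-- Surjections from the cokernel correspond to surjections from the free module that
kill the columns. -/
noncomputable def cokerEquiv (M : Matrix (Fin m) (Fin n) ℤ_[p]) :
    {f : ((Fin m → ℤ_[p]) ⧸ LinearMap.range M.mulVecLin) →ₗ[ℤ_[p]] G // Surjective f} ≃
      {g : (Fin m → ℤ_[p]) →ₗ[ℤ_[p]] G // Surjective g ∧ colApply g M = 0} where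
  toFun f := ⟨f.1.comp (LinearMap.range M.mulVecLin).mkQ,
    f.2.comp (Submodule.mkQ_surjective _),
    (colApply_eq_zero_iff _ M).mpr (by
      intro x hx
      simp only [LinearMap.mem_ker, LinearMap.comp_apply, Submodule.mkQ_apply]
      rw [(Submodule.Quotient.mk_eq_zero _).mpr hx, map_zero])⟩
  invFun g := ⟨(LinearMap.range M.mulVecLin).liftQ g.1 ((colApply_eq_zero_iff g.1 M).mp g.2.2),
    by
      intro y
      obtain ⟨x, hx⟩ := g.2.1 y
      exact ⟨(LinearMap.range M.mulVecLin).mkQ x, by rwa [Submodule.mkQ_apply,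
        Submodule.liftQ_apply]⟩⟩
  left_inv f := by
    apply Subtype.ext
    apply LinearMap.ext
    intro q
    obtain ⟨x, rfl⟩ := Submodule.mkQ_surjective _ q
    rw [Submodule.mkQ_apply, Submodule.liftQ_apply]
    rfl
  right_inv g := by
    apply Subtype.ext
    apply LinearMap.ext
    intro x
    rw [LinearMap.comp_apply, Submodule.mkQ_apply, Submodule.liftQ_apply]

theorem integral_card_surj (k : ℕ) (hk : Nat.card G = p ^ k) (u n : ℕ) :
    ∫ M : Matrix (Fin (n + u)) (Fin n) ℤ_[p],
      (Nat.card {f : ((Fin (n + u) → ℤ_[p]) ⧸ LinearMap.range M.mulVecLin) →ₗ[ℤ_[p]] G //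
        Function.Surjective f} : ℝ) ∂(padicMatrixHaar p (n + u) n)
    = (Nat.card {g : (Fin (n + u) → ℤ_[p]) →ₗ[ℤ_[p]] G // Function.Surjective g} : ℝ)
      * ((Nat.card G : ℝ) ^ n)⁻¹ := by
  classical
  letI : Fintype ((Fin (n + u) → ℤ_[p]) →ₗ[ℤ_[p]] G) := Fintype.ofFinite _
  set μ := padicMatrixHaar p (n + u) n with hμ
  set Surfin : Finset ((Fin (n + u) → ℤ_[p]) →ₗ[ℤ_[p]] G) :=
    Finset.univ.filter (fun g => Surjective g) with hSurfin
  have hcount : ∀ M : Matrix (Fin (n + u)) (Fin n) ℤ_[p],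
      (Nat.card {f : ((Fin (n + u) → ℤ_[p]) ⧸ LinearMap.range M.mulVecLin) →ₗ[ℤ_[p]] G //
        Function.Surjective f} : ℝ)
      = ∑ g ∈ Surfin, (if colApply g M = 0 then (1 : ℝ) else 0) := by
    intro M
    rw [Nat.card_congr (cokerEquiv M), Nat.card_eq_fintype_card, Fintype.card_subtype]
    rw [show (Finset.univ.filter fun g : (Fin (n + u) → ℤ_[p]) →ₗ[ℤ_[p]] G =>
        Surjective g ∧ colApply g M = 0)
      = Surfin.filter (fun g => colApply g M = 0) by rw [hSurfin, Finset.filter_filter]]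
    rw [Finset.card_filter]
    push_cast
    rfl
  have hint : ∀ g ∈ Surfin,
      ∫ M, (if colApply g M = 0 then (1 : ℝ) else 0) ∂μ = ((Nat.card G : ℝ) ^ n)⁻¹ := by
    intro g hg
    have hgs : Surjective g := by
      rw [hSurfin] at hg
      simpa using hg
    have hA : MeasurableSet (colApply g ⁻¹' {(0 : Fin n → G)}) :=
      measurableSet_colApply_fiber hk g 0
    have h1 : (fun M : Matrix (Fin (n + u)) (Fin n) ℤ_[p] =>
        if colApply g M = 0 then (1 : ℝ) else 0)
        = Set.indicator (colApply g ⁻¹' {(0 : Fin n → G)}) fun _ => (1 : ℝ) := by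
      funext M
      rw [Set.indicator_apply]
      simp [Set.mem_preimage]
    rw [h1, MeasureTheory.integral_indicator_const _ hA, measureReal_def, measure_colApply_fiber_zero hk g hgs]
    simp [ENNReal.toReal_inv]
  have hInt : ∀ g ∈ Surfin, MeasureTheory.Integrable
      (fun M : Matrix (Fin (n + u)) (Fin n) ℤ_[p] =>
        if colApply g M = 0 then (1 : ℝ) else 0) μ := by
    intro g hg
    have hA : MeasurableSet (colApply g ⁻¹' {(0 : Fin n → G)}) :=
      measurableSet_colApply_fiber hk g 0
    have h1 : (fun M : Matrix (Fin (n + u)) (Fin n) ℤ_[p] =>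
        if colApply g M = 0 then (1 : ℝ) else 0)
        = Set.indicator (colApply g ⁻¹' {(0 : Fin n → G)}) fun _ => (1 : ℝ) := by
      funext M
      rw [Set.indicator_apply]
      simp [Set.mem_preimage]
    rw [h1]
    exact (MeasureTheory.integrable_const (1 : ℝ)).indicator hA
  calc ∫ M : Matrix (Fin (n + u)) (Fin n) ℤ_[p],
      (Nat.card {f : ((Fin (n + u) → ℤ_[p]) ⧸ LinearMap.range M.mulVecLin) →ₗ[ℤ_[p]] G //
        Function.Surjective f} : ℝ) ∂μ
      = ∫ M, ∑ g ∈ Surfin, (if colApply g M = 0 then (1 : ℝ) else 0) ∂μ := by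
        congr 1
        funext M
        exact hcount M
    _ = ∑ g ∈ Surfin, ∫ M, (if colApply g M = 0 then (1 : ℝ) else 0) ∂μ :=
        MeasureTheory.integral_finset_sum _ hInt
    _ = ∑ _g ∈ Surfin, ((Nat.card G : ℝ) ^ n)⁻¹ := Finset.sum_congr rfl hint
    _ = (Surfin.card : ℝ) * ((Nat.card G : ℝ) ^ n)⁻¹ := by
        rw [Finset.sum_const, nsmul_eq_mul]
    _ = _ := by
        have h5 : Surfin.card
            = Nat.card {g : (Fin (n + u) → ℤ_[p]) →ₗ[ℤ_[p]] G // Function.Surjective g} := by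
          rw [Nat.card_eq_fintype_card, Fintype.card_subtype]
        rw [h5]

end Integral

theorem card_nontop_submodule_eq_zero (hk : Nat.card G = p ^ 0) :
    Nat.card {H : Submodule ℤ_[p] G // H ≠ ⊤} = 0 := by
  have hsub : Subsingleton G := by
    rw [pow_zero] at hk
    exact (Nat.card_eq_one_iff_unique.mp hk).1
  have : IsEmpty {H : Submodule ℤ_[p] G // H ≠ ⊤} := by
    constructor
    rintro ⟨H, hH⟩
    exact hH (by
      ext x
      simp only [Submodule.mem_top, iff_true]
      have : x = 0 := Subsingleton.elim x 0
      rw [this]; exact H.zero_mem)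
  exact Nat.card_of_isEmpty

theorem limit_expected_surjections_coker' (u : ℕ)
    (hG : ∃ k : ℕ, Nat.card G = p ^ k) :
    Tendsto
      (fun n : ℕ =>
        ∫ M : Matrix (Fin (n + u)) (Fin n) ℤ_[p],
          (Nat.card {f : ((Fin (n + u) → ℤ_[p]) ⧸ LinearMap.range M.mulVecLin) →ₗ[ℤ_[p]] G //
            Function.Surjective f} : ℝ) ∂(padicMatrixHaar p (n + u) n))
      atTop (nhds ((Nat.card G : ℝ) ^ u)) := by
  obtain ⟨k, hk⟩ := hG
  have hp : p.Prime := Fact.out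
  set q : ℝ := (p : ℝ) with hq
  have hq1 : 1 < q := by rw [hq]; exact_mod_cast hp.one_lt
  have hq0 : (0 : ℝ) < q := lt_trans one_pos hq1
  have hqne : q ≠ 0 := ne_of_gt hq0
  set C : ℕ := Nat.card {H : Submodule ℤ_[p] G // H ≠ ⊤} with hC
  set S : ℕ → ℕ :=
    fun m => Nat.card {g : (Fin m → ℤ_[p]) →ₗ[ℤ_[p]] G // Function.Surjective g} with hS
  set b : ℕ → ℝ := fun n => (C : ℝ) * q ^ ((k - 1) * (n + u)) * (q ^ (k * n))⁻¹ with hb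
  have hEeq : (fun n : ℕ =>
        ∫ M : Matrix (Fin (n + u)) (Fin n) ℤ_[p],
          (Nat.card {f : ((Fin (n + u) → ℤ_[p]) ⧸ LinearMap.range M.mulVecLin) →ₗ[ℤ_[p]] G //
            Function.Surjective f} : ℝ) ∂(padicMatrixHaar p (n + u) n))
      = fun n => (S (n + u) : ℝ) * ((Nat.card G : ℝ) ^ n)⁻¹ :=
    funext fun n => integral_card_surj k hk u n
  have hcard : (Nat.card G : ℝ) = q ^ k := by rw [hk]; push_cast; rfl
  have hcardu : (Nat.card G : ℝ) ^ u = q ^ (k * u) := by rw [hcard, ← pow_mul]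
  rw [hEeq, hcardu]
  have hinvpos : ∀ n : ℕ, (0 : ℝ) < (q ^ (k * n))⁻¹ := fun n => by positivity
  have hupper : ∀ n : ℕ, (S (n + u) : ℝ) * ((Nat.card G : ℝ) ^ n)⁻¹ ≤ q ^ (k * u) := by
    intro n
    have h1 : (S (n + u) : ℝ) ≤ q ^ (k * (n + u)) := by
      have := card_surj_le (p := p) (G := G) (n + u)
      rw [hk] at this
      calc (S (n + u) : ℝ) ≤ ((p ^ k) ^ (n + u) : ℕ) := by exact_mod_cast this
        _ = q ^ (k * (n + u)) := by push_cast; rw [← pow_mul]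
    have h2 : ((Nat.card G : ℝ) ^ n)⁻¹ = (q ^ (k * n))⁻¹ := by
      rw [hcard, ← pow_mul]
    rw [h2]
    calc (S (n + u) : ℝ) * (q ^ (k * n))⁻¹ ≤ q ^ (k * (n + u)) * (q ^ (k * n))⁻¹ :=
          mul_le_mul_of_nonneg_right h1 (le_of_lt (hinvpos n))
      _ = q ^ (k * u) := by
          rw [show k * (n + u) = k * n + k * u by ring, pow_add, mul_comm (q ^ (k * n)),
            mul_assoc, mul_inv_cancel₀ (by positivity), mul_one]
  have hlower : ∀ n : ℕ, q ^ (k * u) - b n ≤ (S (n + u) : ℝ) * ((Nat.card G : ℝ) ^ n)⁻¹ := by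
    intro n
    have h1 : q ^ (k * (n + u)) - (C : ℝ) * q ^ ((k - 1) * (n + u)) ≤ (S (n + u) : ℝ) := by
      have h2 := card_surj_lower (p := p) (G := G) k hk (n + u)
      rw [hk] at h2
      have h3 : ((p ^ k) ^ (n + u) : ℕ) ≤ (S (n + u) + C * p ^ ((k - 1) * (n + u)) : ℕ) := h2
      have h4 : (((p : ℝ)) ^ k) ^ (n + u) ≤ (S (n + u) : ℝ) + C * q ^ ((k - 1) * (n + u)) := by
        rw [hq]
        exact_mod_cast h3
      rw [← pow_mul] at h4
      linarith
    have h2 : ((Nat.card G : ℝ) ^ n)⁻¹ = (q ^ (k * n))⁻¹ := by rw [hcard, ← pow_mul]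
    rw [h2]
    calc q ^ (k * u) - b n
        = (q ^ (k * (n + u)) - (C : ℝ) * q ^ ((k - 1) * (n + u))) * (q ^ (k * n))⁻¹ := by
          rw [sub_mul, hb, show k * (n + u) = k * n + k * u by ring, pow_add,
            mul_comm (q ^ (k * n)), mul_assoc, mul_inv_cancel₀ (by positivity), mul_one]
      _ ≤ (S (n + u) : ℝ) * (q ^ (k * n))⁻¹ :=
          mul_le_mul_of_nonneg_right h1 (le_of_lt (hinvpos n))
  have hb0 : Tendsto b atTop (nhds 0) := by
    rcases Nat.eq_zero_or_pos k with hk0 | hkpos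
    · have hCz : C = 0 := by rw [hC]; exact card_nontop_submodule_eq_zero (hk0 ▸ hk)
      have : b = fun _ => 0 := by
        funext n
        rw [hb, hCz]
        simp
      rw [this]
      exact tendsto_const_nhds
    · obtain ⟨s, rfl⟩ : ∃ s, k = s + 1 := ⟨k - 1, by omega⟩
      have hbeq : b = fun n => ((C : ℝ) * q ^ (s * u)) * (q⁻¹) ^ n := by
        funext n
        rw [hb]
        simp only [Nat.add_sub_cancel]
        rw [inv_pow]
        rw [mul_assoc, mul_assoc]
        congr 1
        rw [show s * (n + u) = s * u + s * n by ring, pow_add, mul_assoc]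
        congr 1
        rw [show (s + 1) * n = s * n + n by ring, pow_add, mul_inv]
        rw [← mul_assoc, mul_inv_cancel₀ (by positivity), one_mul]
      rw [hbeq]
      have : Tendsto (fun n : ℕ => (q⁻¹) ^ n) atTop (nhds 0) :=
        tendsto_pow_atTop_nhds_zero_of_lt_one (by positivity)
          (by rw [inv_lt_one_iff₀]; right; exact hq1)
      simpa using this.const_mul ((C : ℝ) * q ^ (s * u))
  have hlow : Tendsto (fun n => q ^ (k * u) - b n) atTop (nhds (q ^ (k * u))) := by
    have h6 : Tendsto (fun _ : ℕ => q ^ (k * u)) atTop (nhds (q ^ (k * u))) :=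
      tendsto_const_nhds
    simpa using h6.sub hb0
  exact tendsto_of_tendsto_of_tendsto_of_le_of_le hlow tendsto_const_nhds hlower hupper

theorem limit_expected_surjections_coker (p : ℕ) [Fact p.Prime] (u : ℕ)
    (G : Type) [AddCommGroup G] [Module ℤ_[p] G] [Finite G]
    (hG : ∃ k : ℕ, Nat.card G = p ^ k) :
    Tendsto
      (fun n : ℕ =>
        ∫ M : Matrix (Fin (n + u)) (Fin n) ℤ_[p],
          (Nat.card {f : ((Fin (n + u) → ℤ_[p]) ⧸ LinearMap.range M.mulVecLin) →ₗ[ℤ_[p]] G //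
            Function.Surjective f} : ℝ) ∂(padicMatrixHaar p (n + u) n))
      atTop (nhds ((Nat.card G : ℝ) ^ u)) :=
  limit_expected_surjections_coker' u hG
end

section
/- Let G be a finite abelian group and let d be a positive integer dividing |G|. Then the number of subgroups of G of order d equals the number of subgroups of G of index d. -/
open CommGroup

section aux

variable {A : Type*} [CommGroup A] [Finite A]

instance : HasEnoughRootsOfUnity ℂ (Monoid.exponent A) := by
  have : NeZero ((Monoid.exponent A : ℕ) : ℂ) :=
    ⟨by exact_mod_cast Monoid.exponent_ne_zero_of_finite (G := A)⟩
  infer_instance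

noncomputable def dualEquiv : (A →* ℂˣ) ≃* A :=
  (CommGroup.monoidHom_mulEquiv_of_hasEnoughRootsOfUnity A ℂ).some

instance : Finite (A →* ℂˣ) := Finite.of_equiv A (dualEquiv (A := A)).symm.toEquiv

lemma card_dual : Nat.card (A →* ℂˣ) = Nat.card A :=
  Nat.card_congr (dualEquiv (A := A)).toEquiv

end aux

section ann

variable {G : Type} [CommGroup G] [Finite G]

/-- restriction along the quotient map as a hom of character groups -/
def resHom (H : Subgroup G) : ((G ⧸ H) →* ℂˣ) →* (G →* ℂˣ) where
  toFun φ := φ.comp (QuotientGroup.mk' H)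
  map_one' := by ext; simp
  map_mul' φ ψ := by ext; simp

lemma resHom_injective (H : Subgroup G) : Function.Injective (resHom H) :=
  fun _ _ h => QuotientGroup.monoidHom_ext _ h

instance : Finite (Subgroup G) :=
  Finite.of_injective (fun H => (H : Set G)) SetLike.coe_injective

noncomputable def ann (H : Subgroup G) : Subgroup (G →* ℂˣ) := (resHom H).range

lemma mem_ann {H : Subgroup G} {φ : G →* ℂˣ} : φ ∈ ann H ↔ ∀ h ∈ H, φ h = 1 := by
  constructor
  · rintro ⟨ψ, rfl⟩ h hh
    simp [resHom, (QuotientGroup.eq_one_iff h).mpr hh]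
  · intro hφ
    refine ⟨QuotientGroup.lift H φ fun h hh => hφ h hh, ?_⟩
    ext g; rfl

lemma card_ann (H : Subgroup G) : Nat.card (ann H) = H.index :=
  calc Nat.card (ann H) = Nat.card ((G ⧸ H) →* ℂˣ) :=
        Nat.card_congr (Equiv.ofInjective _ (resHom_injective H)).symm
    _ = Nat.card (G ⧸ H) := card_dual
    _ = H.index := rfl

lemma ann_injective : Function.Injective (ann (G := G)) := by
  have key : ∀ H₁ H₂ : Subgroup G, ann H₁ = ann H₂ → H₂ ≤ H₁ := by
    intro H₁ H₂ h a ha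
    by_contra ha1
    have hne : (a : G ⧸ H₁) ≠ 1 := by
      simpa [QuotientGroup.eq_one_iff] using ha1
    obtain ⟨φ, hφ⟩ := exists_apply_ne_one_of_hasEnoughRootsOfUnity (G ⧸ H₁) ℂ hne
    have hmem : resHom H₁ φ ∈ ann H₂ := h ▸ ⟨φ, rfl⟩
    exact hφ (mem_ann.mp hmem a ha)
  exact fun H₁ H₂ h => le_antisymm (key H₂ H₁ h.symm) (key H₁ H₂ h)

lemma index_ann (H : Subgroup G) : (ann H).index = Nat.card H := by
  have h1 : Nat.card (ann H) * (ann H).index = Nat.card (G →* ℂˣ) :=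
    Subgroup.card_mul_index _
  rw [card_dual, ← H.card_mul_index, card_ann] at h1
  have hpos : 0 < H.index := Nat.pos_of_ne_zero (Subgroup.index_ne_zero_of_finite)
  exact Nat.eq_of_mul_eq_mul_left hpos (by linarith [h1])

end ann

theorem card_subgroups_order_eq_card_subgroups_index (G : Type) [CommGroup G] [Finite G]
    (d : ℕ) (hd : 0 < d) (hdvd : d ∣ Nat.card G) :
    Nat.card {H : Subgroup G // Nat.card H = d} =
      Nat.card {H : Subgroup G // H.index = d} := by
  classical
  have e : (G →* ℂˣ) ≃* G := dualEquiv (A := G)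
  have hinj : Function.Injective (⇑(e : (G →* ℂˣ) →* G)) := fun a b hab => e.injective hab
  have hsurj : Function.Surjective (⇑(e : (G →* ℂˣ) →* G)) := fun a => e.surjective a
  have hmapinj : Function.Injective
      (Subgroup.map (e : (G →* ℂˣ) →* G) : Subgroup (G →* ℂˣ) → Subgroup G) :=
    Subgroup.map_injective hinj
  have hcard_map : ∀ K : Subgroup (G →* ℂˣ),
      Nat.card (K.map (e : (G →* ℂˣ) →* G)) = Nat.card K := fun K =>
    (Nat.card_congr (K.equivMapOfInjective _ hinj).toEquiv).symm
  have hindex_map : ∀ K : Subgroup (G →* ℂˣ),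
      (K.map (e : (G →* ℂˣ) →* G)).index = K.index := by
    intro K
    rw [Subgroup.index_map_of_injective _ hinj,
      MonoidHom.range_eq_top_of_surjective _ hsurj, Subgroup.index_top, mul_one]
  let f : {H : Subgroup G // Nat.card H = d} → {H : Subgroup G // H.index = d} :=
    fun H => ⟨(ann H.1).map (e : (G →* ℂˣ) →* G), by rw [hindex_map, index_ann, H.2]⟩
  let g : {H : Subgroup G // H.index = d} → {H : Subgroup G // Nat.card H = d} :=
    fun H => ⟨(ann H.1).map (e : (G →* ℂˣ) →* G), by rw [hcard_map, card_ann, H.2]⟩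
  have hf : Function.Injective f := fun H₁ H₂ h => Subtype.ext <|
    ann_injective (hmapinj (congrArg Subtype.val h))
  have hg : Function.Injective g := fun H₁ H₂ h => Subtype.ext <|
    ann_injective (hmapinj (congrArg Subtype.val h))
  exact le_antisymm (Nat.card_le_card_of_injective f hf) (Nat.card_le_card_of_injective g hg)
end

section
/- Let p be a prime, n, u ≥ 0 integers, and G a finite abelian p-group. Let φ : ℤ_p^{n+u} → G be a surjective ℤ_p-module homomorphism. Then, with respect to the Haar probability measure μ on (n+u) × n matrices over ℤ_p, the measure of the set of matrices M such that im(M) ⊆ ker(φ) equals |G|^{−n}. -/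
open MeasureTheory Filter

/-- A finite-index measurable additive subgroup of a group with a left-invariant
probability measure has measure equal to the inverse of its index. -/
lemma addSubgroup_measure {X : Type*} [AddCommGroup X] [MeasurableSpace X] [MeasurableAdd X]
    (μ : Measure X) [IsProbabilityMeasure μ] [μ.IsAddLeftInvariant]
    (H : AddSubgroup X) (hm : MeasurableSet (H : Set X)) [hfin : H.FiniteIndex] :
    μ (H : Set X) = (H.index : ENNReal)⁻¹ := by
  haveI : Finite (X ⧸ H) := AddSubgroup.finite_quotient_of_finiteIndex
  haveI : Fintype (X ⧸ H) := Fintype.ofFinite _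
  have hfib : ∀ g : X,
      ((QuotientAddGroup.mk : X → X ⧸ H) ⁻¹' {(g : X ⧸ H)} : Set X)
        = (fun x => (-g) + x) ⁻¹' H := by
    intro g; ext x
    simp only [Set.mem_preimage, Set.mem_singleton_iff, SetLike.mem_coe]
    rw [QuotientAddGroup.eq, ← neg_mem_iff, neg_add_rev, neg_neg]
  have hfibmeas : ∀ q : X ⧸ H,
      MeasurableSet ((QuotientAddGroup.mk : X → X ⧸ H) ⁻¹' {q}) := by
    intro q
    obtain ⟨g, rfl⟩ := QuotientAddGroup.mk_surjective q
    rw [hfib g]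
    exact (measurable_const_add (-g)) hm
  have hfibmeasure : ∀ q : X ⧸ H,
      μ ((QuotientAddGroup.mk : X → X ⧸ H) ⁻¹' {q}) = μ (H : Set X) := by
    intro q
    obtain ⟨g, rfl⟩ := QuotientAddGroup.mk_surjective q
    rw [hfib g]
    exact measure_preimage_add μ (-g) (H : Set X)
  have hunion : (Set.univ : Set X)
      = ⋃ q : X ⧸ H, (QuotientAddGroup.mk : X → X ⧸ H) ⁻¹' {q} := by
    ext x; simp
  have hdisj : Pairwise (Function.onFun Disjoint
      fun q : X ⧸ H => (QuotientAddGroup.mk : X → X ⧸ H) ⁻¹' {q}) := by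
    intro a b hab
    refine Set.disjoint_left.mpr ?_
    rintro x hxa hxb
    exact hab (by
      simp only [Set.mem_preimage, Set.mem_singleton_iff] at hxa hxb
      rw [← hxa, ← hxb])
  have h1 : (1 : ENNReal) = (Fintype.card (X ⧸ H)) • μ (H : Set X) := by
    calc (1 : ENNReal) = μ Set.univ := (measure_univ).symm
      _ = μ (⋃ q : X ⧸ H, (QuotientAddGroup.mk : X → X ⧸ H) ⁻¹' {q}) := by rw [← hunion]
      _ = ∑' q : X ⧸ H, μ ((QuotientAddGroup.mk : X → X ⧸ H) ⁻¹' {q}) :=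
          measure_iUnion hdisj hfibmeas
      _ = ∑ q : X ⧸ H, μ ((QuotientAddGroup.mk : X → X ⧸ H) ⁻¹' {q}) := tsum_fintype _
      _ = ∑ _q : X ⧸ H, μ (H : Set X) := by
          exact Finset.sum_congr rfl fun q _ => hfibmeasure q
      _ = (Fintype.card (X ⧸ H)) • μ (H : Set X) := by
          rw [Finset.sum_const, Finset.card_univ]
  have hindex : H.index = Fintype.card (X ⧸ H) := by
    rw [AddSubgroup.index, Nat.card_eq_fintype_card]
  have h2 : (H.index : ENNReal) * μ (H : Set X) = 1 := by
    rw [hindex, h1, nsmul_eq_mul]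
  have h0 : (H.index : ENNReal) ≠ 0 := Nat.cast_ne_zero.mpr hfin.index_ne_zero
  have ht : (H.index : ENNReal) ≠ ⊤ := ENNReal.natCast_ne_top _
  calc μ (H : Set X) = (H.index : ENNReal)⁻¹ * ((H.index : ENNReal) * μ (H : Set X)) := by
        rw [← mul_assoc, ENNReal.inv_mul_cancel h0 ht, one_mul]
    _ = (H.index : ENNReal)⁻¹ := by rw [h2, mul_one]

theorem measure_image_in_kernel (p : ℕ) [Fact p.Prime] (n u : ℕ)
    (G : Type) [AddCommGroup G] [Module ℤ_[p] G] [Finite G]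
    (hG : ∃ k : ℕ, Nat.card G = p ^ k)
    (φ : (Fin (n + u) → ℤ_[p]) →ₗ[ℤ_[p]] G) (hφ : Function.Surjective φ) :
    padicMatrixHaar p (n + u) n
      {M : Matrix (Fin (n + u)) (Fin n) ℤ_[p] |
        LinearMap.range M.mulVecLin ≤ LinearMap.ker φ} =
      ((Nat.card G : ENNReal))⁻¹ ^ n := by
  obtain ⟨k, hk⟩ := hG
  set μ := padicMatrixHaar p (n + u) n with hμ
  haveI hprob : IsProbabilityMeasure μ := by
    constructor
    exact Measure.addHaarMeasure_self
  haveI hinv : μ.IsAddLeftInvariant := by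
    rw [hμ]; unfold padicMatrixHaar; infer_instance
  -- the column maps and the map ψ
  let colMap : Fin n → (Matrix (Fin (n + u)) (Fin n) ℤ_[p] →ₗ[ℤ_[p]] (Fin (n + u) → ℤ_[p])) :=
    fun j => { toFun := fun M i => M i j,
               map_add' := fun _ _ => rfl,
               map_smul' := fun _ _ => rfl }
  let ψ : Matrix (Fin (n + u)) (Fin n) ℤ_[p] →ₗ[ℤ_[p]] (Fin n → G) :=
    LinearMap.pi fun j => φ.comp (colMap j)
  have hψapp : ∀ M j, ψ M j = φ (fun i => M i j) := fun _ _ => rfl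
  -- ψ is surjective
  have hψsurj : Function.Surjective ψ := by
    intro f
    choose v hv using fun j => hφ (f j)
    refine ⟨fun i j => v j i, ?_⟩
    funext j
    exact hv j
  -- the set in question equals the kernel of ψ
  have hset : {M : Matrix (Fin (n + u)) (Fin n) ℤ_[p] |
        LinearMap.range M.mulVecLin ≤ LinearMap.ker φ}
      = ((LinearMap.ker ψ : Submodule ℤ_[p] _) : Set _) := by
    ext M
    simp only [Set.mem_setOf_eq, SetLike.mem_coe, LinearMap.mem_ker]
    constructor
    · intro h
      funext j
      have hmem : M.mulVec (Pi.single j 1) ∈ LinearMap.range M.mulVecLin :=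
        ⟨Pi.single j 1, rfl⟩
      have h0 : φ (M.mulVec (Pi.single j 1)) = 0 := h hmem
      rw [hψapp]
      simp [Matrix.mulVec_single, mul_one] at h0
      exact h0
    · intro h x hx
      obtain ⟨v, rfl⟩ := hx
      rw [LinearMap.mem_ker]
      have hMv : M.mulVecLin v = ∑ j, v j • (fun i => M i j) := by
        funext i
        simp [Matrix.mulVecLin_apply, Matrix.mulVec, dotProduct,
          Finset.sum_apply, mul_comm]
      rw [hMv, map_sum]
      refine Finset.sum_eq_zero fun j _ => ?_
      rw [_root_.map_smul]
      have hj : φ (fun i => M i j) = 0 := by rw [← hψapp, h]; rfl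
      rw [hj, smul_zero]
  -- p^k kills G
  have hpk : ∀ g : G, ((p : ℤ_[p]) ^ k) • g = 0 := by
    intro g
    have h1 : ((p : ℤ_[p]) ^ k) • g = ((p ^ k : ℕ) : ℤ_[p]) • g := by push_cast; ring_nf
    have h2 : ((p ^ k : ℕ) : ℤ_[p]) • g = (p ^ k : ℕ) • g := Nat.cast_smul_eq_nsmul _ _ _
    rw [h1, h2, ← hk]
    exact card_nsmul_eq_zero'
  -- measurability of the kernel of ψ
  haveI : NeZero (p ^ k) := ⟨pow_ne_zero _ (Nat.Prime.ne_zero Fact.out)⟩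
  let r : Matrix (Fin (n + u)) (Fin n) ℤ_[p] → Matrix (Fin (n + u)) (Fin n) (ZMod (p ^ k)) :=
    fun M i j => PadicInt.toZModPow k (M i j)
  have hfiber : ∀ c : ZMod (p ^ k),
      MeasurableSet ((PadicInt.toZModPow (p := p) k) ⁻¹' {c}) := by
    intro c
    rcases Set.eq_empty_or_nonempty ((PadicInt.toZModPow (p := p) k) ⁻¹' {c}) with h | ⟨x₀, hx₀⟩
    · rw [h]; exact MeasurableSet.empty
    · have hx₀' : PadicInt.toZModPow (p := p) k x₀ = c := hx₀
      have hEq : (PadicInt.toZModPow (p := p) k) ⁻¹' {c}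
          = (fun x => x - x₀) ⁻¹' {y : ℤ_[p] | ‖y‖ ≤ (p : ℝ) ^ (-(k : ℤ))} := by
        ext x
        simp only [Set.mem_preimage, Set.mem_singleton_iff, Set.mem_setOf_eq]
        rw [PadicInt.norm_le_pow_iff_mem_span_pow, ← PadicInt.ker_toZModPow,
          RingHom.mem_ker, map_sub, hx₀', sub_eq_zero]
      rw [hEq]
      have hclosed : IsClosed {y : ℤ_[p] | ‖y‖ ≤ (p : ℝ) ^ (-(k : ℤ))} :=
        isClosed_le continuous_norm continuous_const
      exact (continuous_id.sub continuous_const).measurable hclosed.measurableSet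
  have hcoord : ∀ (i : Fin (n + u)) (j : Fin n),
      Measurable fun M : Matrix (Fin (n + u)) (Fin n) ℤ_[p] => M i j :=
    fun i j => (measurable_pi_apply j).comp (measurable_pi_apply i)
  have hrfiber : ∀ t, MeasurableSet (r ⁻¹' {t}) := by
    intro t
    have hEq : r ⁻¹' {t} = ⋂ i, ⋂ j,
        (fun M : Matrix (Fin (n + u)) (Fin n) ℤ_[p] => M i j) ⁻¹'
          ((PadicInt.toZModPow k) ⁻¹' {t i j}) := by
      ext M
      simp only [Set.mem_preimage, Set.mem_singleton_iff, Set.mem_iInter, r]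
      constructor
      · intro h i j; rw [← h]
      · intro h; funext i j; exact h i j
    rw [hEq]
    exact MeasurableSet.iInter fun i => MeasurableSet.iInter fun j =>
      (hcoord i j) (hfiber (t i j))
  have hrmeas : ∀ A : Set (Matrix (Fin (n + u)) (Fin n) (ZMod (p ^ k))),
      MeasurableSet (r ⁻¹' A) := by
    intro A
    have : r ⁻¹' A = ⋃ t ∈ A, r ⁻¹' {t} := by ext M; simp
    rw [this]
    exact MeasurableSet.biUnion (Set.to_countable A) fun t _ => hrfiber t
  have hsat : ∀ M N : Matrix (Fin (n + u)) (Fin n) ℤ_[p],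
      N ∈ LinearMap.ker ψ → r N = r M → M ∈ LinearMap.ker ψ := by
    intro M N hN hrN
    have hdvd : ∀ i j, ((p : ℤ_[p]) ^ k) ∣ (M i j - N i j) := by
      intro i j
      have h0 : PadicInt.toZModPow (p := p) k (M i j - N i j) = 0 := by
        rw [map_sub, sub_eq_zero]
        exact (congrFun (congrFun hrN i) j).symm
      have h1 : M i j - N i j ∈ RingHom.ker (PadicInt.toZModPow (p := p) k) := h0
      rw [PadicInt.ker_toZModPow, Ideal.mem_span_singleton] at h1
      exact h1
    have hkey : ∀ j, φ (fun i => M i j - N i j) = 0 := by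
      intro j
      choose z hz using fun i => hdvd i j
      have hEq : (fun i => M i j - N i j) = ((p : ℤ_[p]) ^ k) • z := by
        funext i
        rw [Pi.smul_apply, smul_eq_mul, ← hz i]
      rw [hEq, _root_.map_smul, hpk]
    rw [LinearMap.mem_ker]
    funext j
    have hNj : φ (fun i => N i j) = 0 := by
      rw [← hψapp, LinearMap.mem_ker.mp hN]; rfl
    have : (fun i => M i j) = (fun i => M i j - N i j) + (fun i => N i j) := by
      funext i; simp
    rw [hψapp, this, map_add, hkey j, hNj, add_zero]
    rfl
  have hm : MeasurableSet ((LinearMap.ker ψ : Submodule ℤ_[p] _) :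
      Set (Matrix (Fin (n + u)) (Fin n) ℤ_[p])) := by
    have hEq : ((LinearMap.ker ψ : Submodule ℤ_[p] _) : Set (Matrix (Fin (n + u)) (Fin n) ℤ_[p]))
        = r ⁻¹' (r '' ((LinearMap.ker ψ : Submodule ℤ_[p] _) :
            Set (Matrix (Fin (n + u)) (Fin n) ℤ_[p]))) := by
      refine Set.Subset.antisymm (Set.subset_preimage_image r _) ?_
      rintro M ⟨N, hN, hrN⟩
      exact hsat M N hN hrN
    rw [hEq]
    exact hrmeas _
  -- index computation
  set H : AddSubgroup (Matrix (Fin (n + u)) (Fin n) ℤ_[p]) :=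
    (LinearMap.ker ψ).toAddSubgroup with hH
  have hHcoe : (H : Set (Matrix (Fin (n + u)) (Fin n) ℤ_[p])) = ((LinearMap.ker ψ : Submodule ℤ_[p] _) : Set (Matrix (Fin (n + u)) (Fin n) ℤ_[p])) := rfl
  have hHker : H = AddMonoidHom.ker ψ.toAddMonoidHom := by
    ext M
    simp [hH, AddMonoidHom.mem_ker, LinearMap.mem_ker]
  have hind : H.index = Nat.card G ^ n := by
    rw [hHker, AddSubgroup.index_ker]
    have hr : ψ.toAddMonoidHom.range = ⊤ :=
      AddMonoidHom.range_eq_top.mpr hψsurj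
    rw [hr]
    rw [Nat.card_congr AddSubgroup.topEquiv.toEquiv, Nat.card_pi]
    simp
  haveI hfin : H.FiniteIndex := by
    constructor
    rw [hind]
    exact pow_ne_zero _ Nat.card_pos.ne'
  have := addSubgroup_measure μ H (by rw [hHcoe]; exact hm)
  rw [hset, ← hHcoe, this, hind]
  rw [Nat.cast_pow, ENNReal.inv_pow]
end
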